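/- arXiv:1908.00668 — 3 statements merged into one kernel-verified Lean document; each statement's English description precedes it below -/
import Mathlib

section
/- Let 0 < α < 1, let R > 0, and let a₁, a₂ : ℝ → ℂ be bounded measurable functions supported in [−R, R] such that ∫_{ℝ} a₁(s) ds = 0. Then there exists a constant C > 0 (depending on α, R, and the sup norms of a₁ and a₂) such that for all x ∈ ℝ with |x| ≥ 2R one has |𝓘_{α+1}(a₁,a₂)(x)| ≤ C · |x|^{α−2}. -/
/-
Since `∫ a₁ = 0`, one may subtract from the kernel its value at `s = 0`: the term
`∬ a₁(s) a₂(t) (|x| + |x - t|)^{α-1}` factors and vanishes. For `|s| ≤ R ≤ |x|/2` both bases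
are at least `|x|/2` and differ by at most `|s|`, so by the mean value theorem the difference
of kernels is at most `(1 - α) (|x|/2)^{α-2} |s|`. Integrating against `|a₁(s)| |a₂(t)|`
gives the decay `|x|^{α-2}`, with constant governed by the first moment of `a₁` and `‖a₂‖₁`.
-/

open MeasureTheory

/-- The bilinear fractional integral operator
`𝓘_{α+1}(f,g)(x) = ∬ f(s) g(t) (|x−s|+|x−t|)^{α−1} ds dt`. -/
noncomputable def biFracInt (α : ℝ) (f g : ℝ → ℂ) (x : ℝ) : ℂ :=
  ∫ p : ℝ × ℝ, f p.1 * g p.2 * (((|x - p.1| + |x - p.2|) ^ (α - 1) : ℝ) : ℂ)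

open Set Function

lemma integrable_of_norm_le_of_support_subset {X E : Type*} [MeasurableSpace X]
    [NormedAddCommGroup E] {μ : Measure X} {f : X → E} {s : Set X} {M : ℝ} (hs : μ s ≠ ⊤)
    (hf : AEStronglyMeasurable f μ) (hM : ∀ x, ‖f x‖ ≤ M) (hfs : support f ⊆ s) :
    Integrable f μ :=
  (integrableOn_iff_integrable_of_support_subset hfs).1
    (Measure.integrableOn_of_bounded hs hf (ae_of_all _ hM))

lemma abs_rpow_sub_rpow_le_of_neg {p c a b : ℝ} (hc : 0 < c) (hp : p < 0)
    (ha : c ≤ a) (hb : c ≤ b) :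
    |a ^ p - b ^ p| ≤ -p * c ^ (p - 1) * |a - b| := by
  have hderiv : ∀ u ∈ Ici c,
      HasDerivWithinAt (fun u : ℝ => u ^ p) (p * u ^ (p - 1)) (Ici c) u := fun u hu =>
    (Real.hasDerivAt_rpow_const (Or.inl (hc.trans_le hu).ne')).hasDerivWithinAt
  have hbound : ∀ u ∈ Ici c, ‖p * u ^ (p - 1)‖ ≤ -p * c ^ (p - 1) := by
    intro u hu
    have hu0 : 0 < u := hc.trans_le hu
    rw [norm_mul, Real.norm_eq_abs, Real.norm_eq_abs, abs_of_neg hp,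
      abs_of_nonneg (Real.rpow_nonneg hu0.le _)]
    exact mul_le_mul_of_nonneg_left
      (Real.rpow_le_rpow_of_nonpos hc hu (by linarith)) (by linarith)
  simpa [Real.norm_eq_abs] using
    (convex_Ici c).norm_image_sub_le_of_norm_hasDerivWithin_le hderiv hbound hb ha

lemma abs_kernel_sub_kernel_zero_le {α x s : ℝ} (hα : α < 1) (t : ℝ) (hs : 2 * |s| ≤ |x|) :
    |(|x - s| + |x - t|) ^ (α - 1) - (|x| + |x - t|) ^ (α - 1)| ≤
      (1 - α) * (|x| / 2) ^ (α - 2) * |s| := by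
  rcases eq_or_ne s 0 with rfl | hs0
  · simp
  have hx : 0 < |x| / 2 := by linarith [abs_pos.2 hs0]
  have h₁ : |x| / 2 ≤ |x - s| + |x - t| := by
    linarith [abs_sub_abs_le_abs_sub x s, abs_nonneg (x - t)]
  have h₂ : |x| / 2 ≤ |x| + |x - t| := by linarith [abs_nonneg (x - t)]
  calc _ ≤ -(α - 1) * (|x| / 2) ^ (α - 1 - 1) * |(|x - s| + |x - t|) - (|x| + |x - t|)| :=
        abs_rpow_sub_rpow_le_of_neg hx (by linarith) h₁ h₂
    _ ≤ (1 - α) * (|x| / 2) ^ (α - 2) * |s| := by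
        rw [add_sub_add_right_eq_sub, show α - 1 - 1 = α - 2 by ring, neg_sub]
        exact mul_le_mul_of_nonneg_left (by simpa using abs_abs_sub_abs_le_abs_sub (x - s) x)
          (by positivity)

theorem norm_biFracInt_le_of_integral_eq_zero {α x : ℝ} (hα : α < 1) (hx : x ≠ 0)
    {f g : ℝ → ℂ} (hf : Integrable f) (hf_moment : Integrable fun s => |s| * ‖f s‖)
    (hg : Integrable g) (hf₀ : ∫ s, f s = 0) (hf_supp : ∀ s ∈ support f, 2 * |s| ≤ |x|) :
    ‖biFracInt α f g x‖ ≤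
      (1 - α) * (|x| / 2) ^ (α - 2) * ((∫ s, |s| * ‖f s‖) * ∫ t, ‖g t‖) := by
  set K : ℝ × ℝ → ℝ := fun p => (|x - p.1| + |x - p.2|) ^ (α - 1)
  set K₀ : ℝ → ℝ := fun t => (|x| + |x - t|) ^ (α - 1)
  set c := (1 - α) * (|x| / 2) ^ (α - 2)
  have hK₀_bdd : ∀ t, ‖(K₀ t : ℂ)‖ ≤ |x| ^ (α - 1) := fun t => by
    rw [Complex.norm_real, Real.norm_eq_abs, abs_of_nonneg (by positivity)]
    exact Real.rpow_le_rpow_of_nonpos (abs_pos.2 hx) (by linarith [abs_nonneg (x - t)])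
      (by linarith)
  have hgK₀ : Integrable fun t => g t * K₀ t :=
    hg.mul_bdd (by fun_prop) (ae_of_all _ hK₀_bdd)
  have hcancel : ∫ p : ℝ × ℝ, f p.1 * (g p.2 * K₀ p.2) = 0 := by
    rw [Measure.volume_eq_prod, integral_prod_mul f fun t => g t * K₀ t, hf₀, zero_mul]
  have hdiff_bound : ∀ p : ℝ × ℝ,
      ‖f p.1 * g p.2 * ((K p - K₀ p.2 : ℝ) : ℂ)‖ ≤ c * ((|p.1| * ‖f p.1‖) * ‖g p.2‖) := by
    rintro ⟨s, t⟩
    rw [norm_mul, norm_mul, Complex.norm_real, Real.norm_eq_abs]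
    by_cases hs : f s = 0
    · simp [hs]
    have := abs_kernel_sub_kernel_zero_le hα t (hf_supp s hs)
    calc _ ≤ ‖f s‖ * ‖g t‖ * (c * |s|) := by gcongr
      _ = _ := by ring
  have hbound_int : Integrable fun p : ℝ × ℝ => c * ((|p.1| * ‖f p.1‖) * ‖g p.2‖) :=
    (hf_moment.mul_prod hg.norm).const_mul c
  have hdiff_int : Integrable fun p : ℝ × ℝ => f p.1 * g p.2 * ((K p - K₀ p.2 : ℝ) : ℂ) :=
    hbound_int.mono' ((hf.mul_prod hg).aestronglyMeasurable.mul (by fun_prop))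
      (ae_of_all _ hdiff_bound)
  have hsplit : biFracInt α f g x = (∫ p : ℝ × ℝ, f p.1 * (g p.2 * K₀ p.2)) +
      ∫ p : ℝ × ℝ, f p.1 * g p.2 * ((K p - K₀ p.2 : ℝ) : ℂ) := by
    have hG : Integrable fun p : ℝ × ℝ => f p.1 * (g p.2 * K₀ p.2) := hf.mul_prod hgK₀
    rw [← integral_add hG hdiff_int]
    unfold biFracInt
    congr 1 with p
    push_cast
    ring
  rw [hsplit, hcancel, zero_add]
  calc _ ≤ ∫ p : ℝ × ℝ, c * ((|p.1| * ‖f p.1‖) * ‖g p.2‖) :=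
        norm_integral_le_of_norm_le hbound_int (ae_of_all _ hdiff_bound)
    _ = _ := by
        rw [integral_const_mul, Measure.volume_eq_prod,
          integral_prod_mul (fun s => |s| * ‖f s‖) fun t => ‖g t‖]

theorem stmt_5_general (α R : ℝ) (hα1 : α < 1) (hR : 0 < R)
    (a₁ a₂ : ℝ → ℂ) (h₁m : Measurable a₁) (h₂m : Measurable a₂)
    (h₁b : ∃ M, ∀ s, ‖a₁ s‖ ≤ M) (h₂b : ∃ M, ∀ t, ‖a₂ t‖ ≤ M)
    (h₁s : Function.support a₁ ⊆ Set.Icc (-R) R)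
    (h₂s : Function.support a₂ ⊆ Set.Icc (-R) R)
    (h₁0 : ∫ s : ℝ, a₁ s = 0) :
    ∃ C > 0, ∀ x : ℝ, 2 * R ≤ |x| →
      ‖biFracInt α a₁ a₂ x‖ ≤ C * |x| ^ (α - 2) := by
  obtain ⟨M₁, hM₁⟩ := h₁b
  obtain ⟨M₂, hM₂⟩ := h₂b
  have hIcc : volume (Icc (-R) R) ≠ ⊤ := measure_Icc_lt_top.ne
  have ha₁ := integrable_of_norm_le_of_support_subset hIcc h₁m.aestronglyMeasurable hM₁ h₁s
  have ha₂ := integrable_of_norm_le_of_support_subset hIcc h₂m.aestronglyMeasurable hM₂ h₂s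
  have hmoment : Integrable fun s => |s| * ‖a₁ s‖ := by
    refine (integrableOn_iff_integrable_of_support_subset ?_).1
      ((ha₁.norm.integrableOn (s := Icc (-R) R)).continuousOn_mul continuous_abs.continuousOn
        isCompact_Icc)
    exact fun s hs => h₁s fun h => hs (by simp [h])
  set m := (∫ s, |s| * ‖a₁ s‖) * ∫ t, ‖a₂ t‖
  refine ⟨(1 - α) * m / 2 ^ (α - 2) + 1, by positivity, fun x hx => ?_⟩
  have hx₀ : x ≠ 0 := abs_pos.1 (by linarith)
  have hsupp : ∀ s ∈ support a₁, 2 * |s| ≤ |x| := fun s hs => by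
    linarith [abs_le.2 (h₁s hs)]
  calc ‖biFracInt α a₁ a₂ x‖ ≤ (1 - α) * (|x| / 2) ^ (α - 2) * m :=
        norm_biFracInt_le_of_integral_eq_zero hα1 hx₀ ha₁ hmoment ha₂ h₁0 hsupp
    _ = (1 - α) * m / 2 ^ (α - 2) * |x| ^ (α - 2) := by
        rw [Real.div_rpow (abs_nonneg x) zero_le_two]
        ring
    _ ≤ _ := by gcongr; linarith

/-- For `0 < α < 1`, `R > 0`, and bounded measurable `a₁, a₂`
supported in `[−R, R]` with `∫ a₁ = 0`, there is `C > 0` such that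
`|𝓘_{α+1}(a₁,a₂)(x)| ≤ C·|x|^{α−2}` whenever `|x| ≥ 2R`. -/
theorem stmt_5 (α R : ℝ) (hα0 : 0 < α) (hα1 : α < 1) (hR : 0 < R)
    (a₁ a₂ : ℝ → ℂ) (h₁m : Measurable a₁) (h₂m : Measurable a₂)
    (h₁b : ∃ M, ∀ s, ‖a₁ s‖ ≤ M) (h₂b : ∃ M, ∀ t, ‖a₂ t‖ ≤ M)
    (h₁s : Function.support a₁ ⊆ Set.Icc (-R) R)
    (h₂s : Function.support a₂ ⊆ Set.Icc (-R) R)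
    (h₁0 : ∫ s : ℝ, a₁ s = 0) :
    ∃ C > 0, ∀ x : ℝ, 2 * R ≤ |x| →
      ‖biFracInt α a₁ a₂ x‖ ≤ C * |x| ^ (α - 2) :=
  stmt_5_general α R hα1 hR a₁ a₂ h₁m h₂m h₁b h₂b h₁s h₂s h₁0
end

section
/- Let 0 < α < 1. Define a₁ = χ_{(−1,0)} − χ_{(0,1)} (the indicator function of (−1,0) minus the indicator function of (0,1)) and a₂(t) = a₁(t−2). Then ∬_{ℝ²} a₁(s) a₂(t) |t−s|^α ds dt = (4·3^{α+2} − 4^{α+2} − 6·2^{α+2} + 4) / ((α+1)(α+2)). -/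
open MeasureTheory Set

private lemma cont_rpow {q : ℝ} (hq : 0 < q) : Continuous fun x : ℝ => x ^ q := by
  rw [continuous_iff_continuousAt]
  intro x
  exact Real.continuousAt_rpow_const x q (Or.inr hq.le)

private lemma inner_int (α s c d : ℝ) (hα : -1 < α) (hsc : s ≤ c) (hcd : c ≤ d) :
    ∫ t in Ioo c d, |t - s| ^ α
      = ((d - s) ^ (α + 1) - (c - s) ^ (α + 1)) / (α + 1) := by
  rw [← integral_Ioc_eq_integral_Ioo, ← intervalIntegral.integral_of_le hcd]
  have h1 : ∫ t in c..d, |t - s| ^ α = ∫ t in c..d, (t - s) ^ α := by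
    apply intervalIntegral.integral_congr
    intro t ht
    rw [uIcc_of_le hcd] at ht
    show |t - s| ^ α = (t - s) ^ α
    rw [abs_of_nonneg (by have := ht.1; linarith)]
  rw [h1, intervalIntegral.integral_comp_sub_right (fun x => x ^ α) s,
    integral_rpow (Or.inl hα)]

private lemma outer_int (α a b c d : ℝ) (hα : 0 < α) (hab : a ≤ b) (hbc : b ≤ c)
    (hcd : c ≤ d) :
    ∫ s in Ioo a b, ((d - s) ^ (α + 1) - (c - s) ^ (α + 1)) / (α + 1)
      = ((d - a) ^ (α + 2) - (c - a) ^ (α + 2) - (d - b) ^ (α + 2) + (c - b) ^ (α + 2))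
          / ((α + 1) * (α + 2)) := by
  rw [← integral_Ioc_eq_integral_Ioo, ← intervalIntegral.integral_of_le hab]
  have h1 : IntervalIntegrable (fun s => (d - s) ^ (α + 1)) volume a b :=
    ((cont_rpow (by linarith)).comp (continuous_const.sub continuous_id)).intervalIntegrable a b
  have h2 : IntervalIntegrable (fun s => (c - s) ^ (α + 1)) volume a b :=
    ((cont_rpow (by linarith)).comp (continuous_const.sub continuous_id)).intervalIntegrable a b
  rw [intervalIntegral.integral_div, intervalIntegral.integral_sub h1 h2,
    intervalIntegral.integral_comp_sub_left (fun x => x ^ (α + 1)) d,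
    intervalIntegral.integral_comp_sub_left (fun x => x ^ (α + 1)) c,
    integral_rpow (Or.inl (by linarith)), integral_rpow (Or.inl (by linarith))]
  have e : α + 1 + 1 = α + 2 := by ring
  rw [e]
  have n1 : α + 1 ≠ 0 := by linarith
  have n2 : α + 2 ≠ 0 := by linarith
  field_simp
  ring

private lemma rect_int (α a b c d : ℝ) (hα : 0 < α) (hab : a ≤ b) (hbc : b ≤ c)
    (hcd : c ≤ d) :
    ∫ p : ℝ × ℝ, ((Ioo a b) ×ˢ (Ioo c d)).indicator (fun q => |q.2 - q.1| ^ α) p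
      = ((d - a) ^ (α + 2) - (c - a) ^ (α + 2) - (d - b) ^ (α + 2) + (c - b) ^ (α + 2))
          / ((α + 1) * (α + 2)) := by
  have hg : Continuous fun q : ℝ × ℝ => |q.2 - q.1| ^ α :=
    (cont_rpow hα).comp (continuous_snd.sub continuous_fst).abs
  have hms : MeasurableSet ((Ioo a b) ×ˢ (Ioo c d)) :=
    measurableSet_Ioo.prod measurableSet_Ioo
  have hint : IntegrableOn (fun q : ℝ × ℝ => |q.2 - q.1| ^ α)
      ((Ioo a b) ×ˢ (Ioo c d)) volume :=
    (hg.continuousOn.integrableOn_compact (isCompact_Icc.prod isCompact_Icc)).mono_set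
      (Set.prod_mono Ioo_subset_Icc_self Ioo_subset_Icc_self)
  rw [integral_indicator hms]
  rw [Measure.volume_eq_prod] at hint ⊢
  rw [setIntegral_prod _ hint]
  have step : ∀ s ∈ Ioo a b,
      (∫ t in Ioo c d, |t - s| ^ α)
        = ((d - s) ^ (α + 1) - (c - s) ^ (α + 1)) / (α + 1) := by
    intro s hs
    exact inner_int α s c d (by linarith) (le_trans hs.2.le hbc) hcd
  rw [setIntegral_congr_fun measurableSet_Ioo step]
  exact outer_int α a b c d hα hab hbc hcd

private lemma prodIndicator_aux (I J : Set ℝ) (g : ℝ × ℝ → ℝ) (p : ℝ × ℝ) :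
    I.indicator (fun _ => (1 : ℝ)) p.1 * J.indicator (fun _ => (1 : ℝ)) p.2 * g p
      = (I ×ˢ J).indicator g p := by
  by_cases h1 : p.1 ∈ I <;> by_cases h2 : p.2 ∈ J <;>
    simp [Set.indicator_apply, h1, h2, Set.mem_prod]

private lemma ind_integrable (α a b c d : ℝ) (hα : 0 < α) :
    Integrable (((Ioo a b) ×ˢ (Ioo c d)).indicator
      (fun q : ℝ × ℝ => |q.2 - q.1| ^ α)) volume := by
  have hg : Continuous fun q : ℝ × ℝ => |q.2 - q.1| ^ α :=
    (cont_rpow hα).comp (continuous_snd.sub continuous_fst).abs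
  have hms : MeasurableSet ((Ioo a b) ×ˢ (Ioo c d)) :=
    measurableSet_Ioo.prod measurableSet_Ioo
  rw [integrable_indicator_iff hms]
  exact (hg.continuousOn.integrableOn_compact (isCompact_Icc.prod isCompact_Icc)).mono_set
    (Set.prod_mono Ioo_subset_Icc_self Ioo_subset_Icc_self)

/-- With `a₁ = χ_{(−1,0)} − χ_{(0,1)}` and `a₂(t) = a₁(t−2)`,
`∬ a₁(s) a₂(t) |t−s|^α ds dt = (4·3^{α+2} − 4^{α+2} − 6·2^{α+2} + 4)/((α+1)(α+2))`. -/
theorem stmt_8 (α : ℝ) (hα0 : 0 < α) (hα1 : α < 1)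
    (a₁ a₂ : ℝ → ℂ)
    (ha₁ : a₁ = fun s => (Set.Ioo (-1 : ℝ) 0).indicator (fun _ => (1 : ℂ)) s
                  - (Set.Ioo (0 : ℝ) 1).indicator (fun _ => (1 : ℂ)) s)
    (ha₂ : a₂ = fun t => a₁ (t - 2)) :
    (∫ p : ℝ × ℝ, a₁ p.1 * a₂ p.2 * ((|p.2 - p.1| ^ α : ℝ) : ℂ))
      = (((4 * 3 ^ (α + 2) - 4 ^ (α + 2) - 6 * 2 ^ (α + 2) + 4)
            / ((α + 1) * (α + 2)) : ℝ) : ℂ) := by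
  set g : ℝ × ℝ → ℝ := fun q => |q.2 - q.1| ^ α with hg
  set I1 : Set ℝ := Ioo (-1 : ℝ) 0
  set I2 : Set ℝ := Ioo (0 : ℝ) 1
  set J1 : Set ℝ := Ioo (1 : ℝ) 2
  set J2 : Set ℝ := Ioo (2 : ℝ) 3
  -- real versions of a₁, a₂
  have hr1 : ∀ s : ℝ, a₁ s
      = ((I1.indicator (fun _ => (1:ℝ)) s - I2.indicator (fun _ => (1:ℝ)) s : ℝ) : ℂ) := by
    intro s
    rw [ha₁]
    by_cases h1 : s ∈ I1 <;> by_cases h2 : s ∈ I2 <;>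
      simp [Set.indicator_apply, h1, h2]
  have hmem1 : ∀ t : ℝ, t - 2 ∈ I1 ↔ t ∈ J1 := by
    intro t
    simp only [I1, J1, mem_Ioo]
    constructor <;> intro h <;> exact ⟨by linarith [h.1], by linarith [h.2]⟩
  have hmem2 : ∀ t : ℝ, t - 2 ∈ I2 ↔ t ∈ J2 := by
    intro t
    simp only [I2, J2, mem_Ioo]
    constructor <;> intro h <;> exact ⟨by linarith [h.1], by linarith [h.2]⟩
  have hr2 : ∀ t : ℝ, a₂ t
      = ((J1.indicator (fun _ => (1:ℝ)) t - J2.indicator (fun _ => (1:ℝ)) t : ℝ) : ℂ) := by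
    intro t
    rw [ha₂]
    show a₁ (t - 2) = _
    rw [hr1 (t - 2)]
    congr 1
    rw [indicator_apply, indicator_apply, indicator_apply, indicator_apply,
      if_congr (hmem1 t) rfl rfl, if_congr (hmem2 t) rfl rfl]
  -- rewrite the integrand as ofReal of a sum of rectangle indicators
  have key : (fun p : ℝ × ℝ => a₁ p.1 * a₂ p.2 * ((|p.2 - p.1| ^ α : ℝ) : ℂ))
      = fun p : ℝ × ℝ => (((I1 ×ˢ J1).indicator g p - (I1 ×ˢ J2).indicator g p
          - (I2 ×ˢ J1).indicator g p + (I2 ×ˢ J2).indicator g p : ℝ) : ℂ) := by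
    funext p
    rw [hr1 p.1, hr2 p.2]
    rw [← Complex.ofReal_mul, ← Complex.ofReal_mul]
    congr 1
    rw [← prodIndicator_aux I1 J1 g p, ← prodIndicator_aux I1 J2 g p,
      ← prodIndicator_aux I2 J1 g p, ← prodIndicator_aux I2 J2 g p]
    show _ = _ * _ * g p - _ * _ * g p - _ * _ * g p + _ * _ * g p
    ring
  have hA : Integrable ((I1 ×ˢ J1).indicator g) volume := ind_integrable α _ _ _ _ hα0
  have hB : Integrable ((I1 ×ˢ J2).indicator g) volume := ind_integrable α _ _ _ _ hα0
  have hC : Integrable ((I2 ×ˢ J1).indicator g) volume := ind_integrable α _ _ _ _ hα0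
  have hD : Integrable ((I2 ×ˢ J2).indicator g) volume := ind_integrable α _ _ _ _ hα0
  have hAB : Integrable (fun p : ℝ × ℝ => (I1 ×ˢ J1).indicator g p
      - (I1 ×ˢ J2).indicator g p) volume := hA.sub hB
  have hABC : Integrable (fun p : ℝ × ℝ => (I1 ×ˢ J1).indicator g p
      - (I1 ×ˢ J2).indicator g p - (I2 ×ˢ J1).indicator g p) volume := hAB.sub hC
  have e1 : (∫ p : ℝ × ℝ, ((I1 ×ˢ J1).indicator g p - (I1 ×ˢ J2).indicator g p
        - (I2 ×ˢ J1).indicator g p + (I2 ×ˢ J2).indicator g p))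
      = (∫ p : ℝ × ℝ, ((I1 ×ˢ J1).indicator g p - (I1 ×ˢ J2).indicator g p
        - (I2 ×ˢ J1).indicator g p)) + ∫ p : ℝ × ℝ, (I2 ×ˢ J2).indicator g p :=
    integral_add hABC hD
  have e2 : (∫ p : ℝ × ℝ, ((I1 ×ˢ J1).indicator g p - (I1 ×ˢ J2).indicator g p
        - (I2 ×ˢ J1).indicator g p))
      = (∫ p : ℝ × ℝ, ((I1 ×ˢ J1).indicator g p - (I1 ×ˢ J2).indicator g p))
        - ∫ p : ℝ × ℝ, (I2 ×ˢ J1).indicator g p := integral_sub hAB hC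
  have e3 : (∫ p : ℝ × ℝ, ((I1 ×ˢ J1).indicator g p - (I1 ×ˢ J2).indicator g p))
      = (∫ p : ℝ × ℝ, (I1 ×ˢ J1).indicator g p)
        - ∫ p : ℝ × ℝ, (I1 ×ˢ J2).indicator g p := integral_sub hA hB
  have vA : (∫ p : ℝ × ℝ, (I1 ×ˢ J1).indicator g p)
      = ((2 - (-1) : ℝ) ^ (α + 2) - (1 - (-1) : ℝ) ^ (α + 2) - ((2 : ℝ) - 0) ^ (α + 2)
          + ((1 : ℝ) - 0) ^ (α + 2)) / ((α + 1) * (α + 2)) :=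
    rect_int α (-1) 0 1 2 hα0 (by norm_num) (by norm_num) (by norm_num)
  have vB : (∫ p : ℝ × ℝ, (I1 ×ˢ J2).indicator g p)
      = ((3 - (-1) : ℝ) ^ (α + 2) - (2 - (-1) : ℝ) ^ (α + 2) - ((3 : ℝ) - 0) ^ (α + 2)
          + ((2 : ℝ) - 0) ^ (α + 2)) / ((α + 1) * (α + 2)) :=
    rect_int α (-1) 0 2 3 hα0 (by norm_num) (by norm_num) (by norm_num)
  have vC : (∫ p : ℝ × ℝ, (I2 ×ˢ J1).indicator g p)
      = (((2 : ℝ) - 0) ^ (α + 2) - ((1 : ℝ) - 0) ^ (α + 2) - ((2 : ℝ) - 1) ^ (α + 2)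
          + ((1 : ℝ) - 1) ^ (α + 2)) / ((α + 1) * (α + 2)) :=
    rect_int α 0 1 1 2 hα0 (by norm_num) (by norm_num) (by norm_num)
  have vD : (∫ p : ℝ × ℝ, (I2 ×ˢ J2).indicator g p)
      = (((3 : ℝ) - 0) ^ (α + 2) - ((2 : ℝ) - 0) ^ (α + 2) - ((3 : ℝ) - 1) ^ (α + 2)
          + ((2 : ℝ) - 1) ^ (α + 2)) / ((α + 1) * (α + 2)) :=
    rect_int α 0 1 2 3 hα0 (by norm_num) (by norm_num) (by norm_num)
  have real_eq : (∫ p : ℝ × ℝ, ((I1 ×ˢ J1).indicator g p - (I1 ×ˢ J2).indicator g p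
        - (I2 ×ˢ J1).indicator g p + (I2 ×ˢ J2).indicator g p))
      = (4 * 3 ^ (α + 2) - 4 ^ (α + 2) - 6 * 2 ^ (α + 2) + 4) / ((α + 1) * (α + 2)) := by
    rw [e1, e2, e3, vA, vB, vC, vD]
    norm_num
    simp only [Real.one_rpow, Real.zero_rpow (show α + 2 ≠ 0 by linarith)]
    have n1 : α + 1 ≠ 0 := by linarith
    have n2 : α + 2 ≠ 0 := by linarith
    field_simp
    ring
  rw [key]
  exact (integral_ofReal (𝕜 := ℂ)).trans (congrArg _ real_eq)
end

section
/- For every α with 0 < α < 1, one has 4·3^{α+2} − 4^{α+2} − 6·2^{α+2} + 4 ≠ 0. -/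
/-!
Dividing by `4 * 3 ^ t` turns the quantity into `gap t = 9 + 3^(-t) - 4 (4/3)^t - 6 (2/3)^t`,
which vanishes at `t = 0` and `t = 1`. With `u = log 2`, `v = log 3`, the second derivative
satisfies `3^t gap'' t = v² - 4 (2u - v)² 4^t - 6 (u - v)² 2^t ≤ -(9v² - 28uv + 22u²) < 0`
for `t ≥ 0`, the quadratic form being positive definite. So `gap` is strictly concave on `[0, ∞)`,
hence positive on `(0, 1)`.
-/

open Real Set

lemma hasDerivAt_exp_mul (c t : ℝ) : HasDerivAt (fun t => exp (c * t)) (c * exp (c * t)) t := by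
  simpa [mul_comm] using ((hasDerivAt_id t).const_mul c).exp

noncomputable def gap (t : ℝ) : ℝ :=
  9 + exp (-log 3 * t) - 4 * exp ((log 4 - log 3) * t) - 6 * exp ((log 2 - log 3) * t)

lemma deriv_gap : deriv gap = fun t => -log 3 * exp (-log 3 * t)
    - 4 * ((log 4 - log 3) * exp ((log 4 - log 3) * t))
    - 6 * ((log 2 - log 3) * exp ((log 2 - log 3) * t)) := by
  funext t
  exact ((((hasDerivAt_exp_mul _ t).const_add 9).sub ((hasDerivAt_exp_mul _ t).const_mul 4)).sub
    ((hasDerivAt_exp_mul _ t).const_mul 6)).deriv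

lemma deriv2_gap (t : ℝ) : deriv^[2] gap t = (log 3) ^ 2 * exp (-log 3 * t)
    - 4 * (log 4 - log 3) ^ 2 * exp ((log 4 - log 3) * t)
    - 6 * (log 2 - log 3) ^ 2 * exp ((log 2 - log 3) * t) := by
  rw [Function.iterate_succ_apply, Function.iterate_one, deriv_gap]
  have := (((hasDerivAt_exp_mul (-log 3) t).const_mul (-log 3)).sub
    (((hasDerivAt_exp_mul (log 4 - log 3) t).const_mul (log 4 - log 3)).const_mul 4)).sub
    (((hasDerivAt_exp_mul (log 2 - log 3) t).const_mul (log 2 - log 3)).const_mul 6)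
  exact this.deriv.trans (by ring)

lemma deriv2_gap_neg {t : ℝ} (ht : 0 ≤ t) : deriv^[2] gap t < 0 := by
  have h4 : 1 ≤ exp (log 4 * t) := one_le_exp (by positivity)
  have h2 : 1 ≤ exp (log 2 * t) := one_le_exp (by positivity)
  have hlog2 : 0 < log 2 := log_pos one_lt_two
  -- `9 (v² - 4 (2u - v)² - 6 (u - v)²) = -(9v - 14u)² - 2u²` with `u = log 2`, `v = log 3`
  have hquad : (log 3) ^ 2 < 4 * (log 4 - log 3) ^ 2 + 6 * (log 2 - log 3) ^ 2 := by
    rw [log_four_eq]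
    nlinarith [sq_nonneg (9 * log 3 - 14 * log 2)]
  have hscaled : exp (log 3 * t) * deriv^[2] gap t = (log 3) ^ 2
      - 4 * (log 4 - log 3) ^ 2 * exp (log 4 * t) - 6 * (log 2 - log 3) ^ 2 * exp (log 2 * t) := by
    rw [deriv2_gap, sub_mul, sub_mul, neg_mul, exp_sub, exp_sub, exp_neg]
    field_simp
  have := exp_pos (log 3 * t)
  nlinarith [mul_le_mul_of_nonneg_left h4 (sq_nonneg (log 4 - log 3)),
    mul_le_mul_of_nonneg_left h2 (sq_nonneg (log 2 - log 3))]

lemma strictConcaveOn_gap : StrictConcaveOn ℝ (Ici 0) gap :=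
  strictConcaveOn_of_deriv2_neg' (convex_Ici 0) (by unfold gap; fun_prop)
    fun _ ht => deriv2_gap_neg ht

lemma gap_zero : gap 0 = 0 := by
  norm_num [gap]

lemma gap_one : gap 1 = 0 := by
  rw [gap, mul_one, mul_one, mul_one, exp_sub, exp_sub, exp_neg, exp_log (by norm_num),
    exp_log (by norm_num), exp_log (by norm_num)]
  norm_num

lemma gap_pos {t : ℝ} (ht₀ : 0 < t) (ht₁ : t < 1) : 0 < gap t := by
  have h := strictConcaveOn_gap.2 (x := 0) (y := 1) (by norm_num) (by norm_num) zero_ne_one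
    (sub_pos.2 ht₁) ht₀ (sub_add_cancel 1 t)
  simpa [gap_zero, gap_one] using h

lemma eq_four_mul_rpow_mul_gap (t : ℝ) :
    4 * (3 : ℝ) ^ (t + 2) - (4 : ℝ) ^ (t + 2) - 6 * (2 : ℝ) ^ (t + 2) + 4 = 4 * 3 ^ t * gap t := by
  simp only [rpow_add (by norm_num : (0 : ℝ) < 3), rpow_add (by norm_num : (0 : ℝ) < 4),
    rpow_add (by norm_num : (0 : ℝ) < 2), rpow_two]
  simp only [rpow_def_of_pos (by norm_num : (0 : ℝ) < 3),
    rpow_def_of_pos (by norm_num : (0 : ℝ) < 4), rpow_def_of_pos (by norm_num : (0 : ℝ) < 2), gap,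
    sub_mul, neg_mul, exp_sub, exp_neg]
  field_simp
  ring

/-- For every `α ∈ (0,1)`,
`4·3^{α+2} − 4^{α+2} − 6·2^{α+2} + 4 ≠ 0`. -/
theorem stmt_9 (α : ℝ) (hα0 : 0 < α) (hα1 : α < 1) :
    4 * (3 : ℝ) ^ (α + 2) - (4 : ℝ) ^ (α + 2) - 6 * (2 : ℝ) ^ (α + 2) + 4 ≠ 0 := by
  rw [eq_four_mul_rpow_mul_gap]
  have := gap_pos hα0 hα1
  positivity
end
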